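/- arXiv:1703.05262 — 4 statements merged into one kernel-verified Lean document; each statement's English description precedes it below -/
import Mathlib

section
/- For any integer s > 2 and any sequence (c_k) with c_k ∈ {1,...,s-1}, the series Σ_{k=1}^∞ c_k / s^{c_1+c_2+⋯+c_k} converges to a real number in the interval [(s-1)/(s^{s-1}-1), 1/(s-1)]. -/
open Finset

/-- The term of the series: `c n / s ^ (c 1 + ... + c (n+1))` (0-indexed). -/
noncomputable def sTerm (s : ℕ) (c : ℕ → ℕ) (n : ℕ) : ℝ :=
  (c n : ℝ) / (s : ℝ) ^ (∑ k ∈ Finset.range (n + 1), c k)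

/-- `x = Σ_{k=1}^∞ c_k / s^{c_1+⋯+c_k}`. -/
noncomputable def sVal (s : ℕ) (c : ℕ → ℕ) : ℝ := ∑' n : ℕ, sTerm s c n

/-- The sequence `(c_k)` has all terms in `{1, ..., s-1}`. -/
def sValid (s : ℕ) (c : ℕ → ℕ) : Prop := ∀ k, 1 ≤ c k ∧ c k ≤ s - 1

/-- The set `S_{(s,0)}`. -/
def Sset (s : ℕ) : Set ℝ := { x | ∃ c : ℕ → ℕ, sValid s c ∧ x = sVal s c }

/-- The cylinder `Δ'_{c_1 ... c_n}` of rank `n` with base the first `n` terms of `c`. -/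
def cyl (s n : ℕ) (c : ℕ → ℕ) : Set ℝ :=
  { x | ∃ c' : ℕ → ℕ, sValid s c' ∧ (∀ k < n, c' k = c k) ∧ x = sVal s c' }

/-- The cylinder `Δ'_{c_1 ... c_n p}`: prefix of length `n` from `c`, next digit `p`. -/
def cylExt (s n : ℕ) (c : ℕ → ℕ) (p : ℕ) : Set ℝ :=
  { x | ∃ c' : ℕ → ℕ, sValid s c' ∧ (∀ k < n, c' k = c k) ∧ c' n = p ∧ x = sVal s c' }

/-- `g_n = Σ_{k=1}^n c_k / s^{c_1+⋯+c_k}`. -/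
noncomputable def gPart (s n : ℕ) (c : ℕ → ℕ) : ℝ := ∑ k ∈ Finset.range n, sTerm s c k

/-!
The `n`-th term factors as `(c_n / s ^ c_n) * s⁻¹ ^ (c_1 + ⋯ + c_{n-1})`. Since `x ↦ x / s ^ x`
decreases on `x ≥ 1`, the first factor lies between `(s - 1) / s ^ (s - 1)` and `1 / s`, while the
exponent lies between `n - 1` and `(n - 1)(s - 1)`. So the terms are squeezed between those of the
geometric series `(s - 1) * Σ_{k ≥ 1} s ^ (-(s - 1) k)` and `Σ_{k ≥ 1} s ^ (-k)`, whose sums are the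
two endpoints.
-/

lemma Nat.mul_pow_le_mul_pow {s a b : ℕ} (hs : 2 ≤ s) (ha : 1 ≤ a) (hab : a ≤ b) :
    b * s ^ a ≤ a * s ^ b := by
  induction b, hab using Nat.le_induction with
  | base => rfl
  | succ b hab ih =>
    have hb : b + 1 ≤ s * b := by nlinarith
    calc (b + 1) * s ^ a ≤ s * (b * s ^ a) := by rw [← mul_assoc]; gcongr
      _ ≤ s * (a * s ^ b) := Nat.mul_le_mul_left _ ih
      _ = a * s ^ (b + 1) := by ring

lemma div_pow_self_le_div_pow_self {s a b : ℕ} (hs : 2 ≤ s) (ha : 1 ≤ a) (hab : a ≤ b) :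
    (b : ℝ) / (s : ℝ) ^ b ≤ (a : ℝ) / (s : ℝ) ^ a := by
  have hs₀ : (0 : ℝ) < s := by positivity
  rw [div_le_div_iff₀ (by positivity) (by positivity)]
  exact_mod_cast Nat.mul_pow_le_mul_pow hs ha hab

lemma hasSum_inv_pow_succ {x : ℝ} (hx : 1 < x) :
    HasSum (fun n : ℕ ↦ x⁻¹ ^ (n + 1)) (x - 1)⁻¹ := by
  have hx₀ : x ≠ 0 := by positivity
  have h := (hasSum_geometric_of_lt_one (by positivity) (inv_lt_one_of_one_lt₀ hx)).mul_right x⁻¹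
  rw [← mul_inv, sub_mul, inv_mul_cancel₀ hx₀, one_mul] at h
  simpa only [← pow_succ] using h

lemma card_le_sum_of_one_le {c : ℕ → ℕ} (hc : ∀ k, 1 ≤ c k) (n : ℕ) :
    n ≤ ∑ k ∈ range n, c k := by
  simpa using card_nsmul_le_sum (range n) c 1 fun k _ ↦ hc k

lemma sum_le_mul_of_le {c : ℕ → ℕ} {m : ℕ} (hc : ∀ k, c k ≤ m) (n : ℕ) :
    ∑ k ∈ range n, c k ≤ n * m := by
  simpa using sum_le_card_nsmul (range n) c m fun k _ ↦ hc k

lemma sTerm_eq (s : ℕ) (c : ℕ → ℕ) (n : ℕ) :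
    sTerm s c n = (c n : ℝ) / (s : ℝ) ^ c n * (s : ℝ)⁻¹ ^ ∑ k ∈ range n, c k := by
  rw [sTerm, sum_range_succ, pow_add, inv_pow]
  ring

lemma sTerm_nonneg (s : ℕ) (c : ℕ → ℕ) (n : ℕ) : 0 ≤ sTerm s c n := by
  unfold sTerm
  positivity

namespace sValid

variable {s : ℕ} {c : ℕ → ℕ}

lemma sTerm_le (hs : 2 ≤ s) (hc : sValid s c) (n : ℕ) :
    sTerm s c n ≤ (s : ℝ)⁻¹ ^ (n + 1) := by
  have hs₁ : (1 : ℝ) ≤ s := by exact_mod_cast (by omega : 1 ≤ s)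
  have hdigit : (c n : ℝ) / (s : ℝ) ^ c n ≤ (s : ℝ)⁻¹ := by
    simpa using div_pow_self_le_div_pow_self hs le_rfl (hc n).1
  have htail : (s : ℝ)⁻¹ ^ ∑ k ∈ range n, c k ≤ (s : ℝ)⁻¹ ^ n :=
    pow_le_pow_of_le_one (by positivity) (inv_le_one_of_one_le₀ hs₁)
      (card_le_sum_of_one_le (fun k ↦ (hc k).1) n)
  rw [sTerm_eq, pow_succ']
  gcongr

lemma le_sTerm (hs : 2 ≤ s) (hc : sValid s c) (n : ℕ) :
    ((s : ℝ) - 1) * ((s : ℝ) ^ (s - 1))⁻¹ ^ (n + 1) ≤ sTerm s c n := by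
  have hs₁ : (1 : ℝ) ≤ s := by exact_mod_cast (by omega : 1 ≤ s)
  have hdigit : ((s : ℝ) - 1) / (s : ℝ) ^ (s - 1) ≤ (c n : ℝ) / (s : ℝ) ^ c n := by
    have := div_pow_self_le_div_pow_self hs (hc n).1 (hc n).2
    rwa [Nat.cast_sub (by omega), Nat.cast_one] at this
  have htail : (s : ℝ)⁻¹ ^ (n * (s - 1)) ≤ (s : ℝ)⁻¹ ^ ∑ k ∈ range n, c k :=
    pow_le_pow_of_le_one (by positivity) (inv_le_one_of_one_le₀ hs₁)
      (sum_le_mul_of_le (fun k ↦ (hc k).2) n)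
  calc ((s : ℝ) - 1) * ((s : ℝ) ^ (s - 1))⁻¹ ^ (n + 1)
      = ((s : ℝ) - 1) / (s : ℝ) ^ (s - 1) * (s : ℝ)⁻¹ ^ (n * (s - 1)) := by
        rw [pow_succ', ← inv_pow, ← pow_mul, mul_comm (s - 1) n, inv_pow]
        ring
    _ ≤ sTerm s c n := by
        rw [sTerm_eq]
        gcongr

end sValid

theorem stmt0 (s : ℕ) (hs : 2 < s) (c : ℕ → ℕ) (hc : sValid s c) :
    Summable (sTerm s c) ∧
      sVal s c ∈ Set.Icc (((s : ℝ) - 1) / ((s : ℝ) ^ (s - 1) - 1)) (1 / ((s : ℝ) - 1)) := by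
  have hs₁ : (1 : ℝ) < s := by exact_mod_cast (by omega : 1 < s)
  have hupper := hasSum_inv_pow_succ hs₁
  have hlower := (hasSum_inv_pow_succ (one_lt_pow₀ hs₁ (by omega : s - 1 ≠ 0))).mul_left
    ((s : ℝ) - 1)
  have hsum : Summable (sTerm s c) :=
    hupper.summable.of_nonneg_of_le (sTerm_nonneg s c) (hc.sTerm_le hs.le)
  refine ⟨hsum, ?_, ?_⟩
  · rw [div_eq_mul_inv]
    exact hasSum_le (hc.le_sTerm hs.le) hlower hsum.hasSum
  · rw [one_div]
    exact hasSum_le (hc.sTerm_le hs.le) hsum.hasSum hupper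
end

section
/- Given s > 2 and fixed digits c_1,…,c_n ∈ {1,…,s-1}, the infimum of the cylinder Δ'_{c_1…c_n} (the set of all x = Σ_{k=1}^∞ c_k'/s^{c_1'+⋯+c_k'} with c_k' = c_k for k ≤ n) equals g_n + (s-1)/(s^{c_1+⋯+c_n}(s^{s-1}-1)), where g_n = Σ_{k=1}^n c_k/s^{c_1+⋯+c_k}; this infimum is attained by the sequence continuing with c_k = s-1 for all k > n. -/
/-!
Splitting off the first `n` digits gives `sVal s d = g_n + sVal s (tail d) / s ^ (c₁ + ⋯ + cₙ)`,
so it suffices that the constant sequence `e = s - 1` minimises `sVal` among digit sequences with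
values in `{1, …, e}`. Its value is `L = e / (s ^ e - 1)`. For any such sequence the telescoping
identity `1 = ∑ₖ (s ^ cₖ - 1) / s ^ (c₁ + ⋯ + cₖ)` writes `L` as `∑ₖ L (s ^ cₖ - 1) / s ^ (c₁ + ⋯ + cₖ)`,
and this is termwise at most `∑ₖ cₖ / s ^ (c₁ + ⋯ + cₖ)` because `L (s ^ d - 1) ≤ d` for `d ≤ e`:
`(s ^ d - 1) / d` is increasing in `d`, being `s - 1` times the average of `1, s, …, s ^ (d - 1)`.
-/

open Finset

open Filter Topology

theorem Monotone.mul_sum_range_le_mul_sum_range {f : ℕ → ℝ} (hf : Monotone f) {d e : ℕ}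
    (hde : d ≤ e) : (e : ℝ) * ∑ i ∈ range d, f i ≤ d * ∑ i ∈ range e, f i := by
  have hhead : ∑ i ∈ range d, f i ≤ d * f d := by
    simpa using sum_le_card_nsmul (range d) f (f d) fun i hi => hf (mem_range.1 hi).le
  have htail : ((e : ℝ) - d) * f d ≤ ∑ i ∈ Ico d e, f i := by
    simpa [Nat.cast_sub hde] using card_nsmul_le_sum (Ico d e) f (f d) fun i hi => hf (mem_Ico.1 hi).1
  have hed : (0 : ℝ) ≤ e - d := sub_nonneg.2 (by exact_mod_cast hde)
  rw [← sum_range_add_sum_Ico f hde]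
  nlinarith [mul_le_mul_of_nonneg_left hhead hed, mul_le_mul_of_nonneg_left htail d.cast_nonneg]

theorem mul_pow_sub_one_le_mul_pow_sub_one {x : ℝ} (hx : 1 ≤ x) {d e : ℕ} (hde : d ≤ e) :
    (e : ℝ) * (x ^ d - 1) ≤ d * (x ^ e - 1) := by
  have h := mul_le_mul_of_nonneg_right
    ((pow_right_mono₀ hx).mul_sum_range_le_mul_sum_range hde) (sub_nonneg.2 hx)
  rw [← geom_sum_mul, ← geom_sum_mul]
  linarith

theorem hasSum_sub_succ_of_antitone {u : ℕ → ℝ} (hu : Antitone u)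
    (hlim : Tendsto u atTop (𝓝 0)) : HasSum (fun k => u k - u (k + 1)) (u 0) := by
  refine (hasSum_iff_tendsto_nat_of_nonneg (fun k => sub_nonneg.2 (hu k.le_succ)) _).2 ?_
  simp_rw [sum_range_sub']
  simpa using tendsto_const_nhds.sub hlim

theorem hasSum_pow_sub_one_div_pow_sum_range {s : ℕ} (hs : 1 < s) {c : ℕ → ℕ}
    (hc : ∀ k, 1 ≤ c k) :
    HasSum (fun k => ((s : ℝ) ^ c k - 1) / (s : ℝ) ^ (∑ j ∈ range (k + 1), c j)) 1 := by
  have hs' : (1 : ℝ) < s := by exact_mod_cast hs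
  have hσ : Tendsto (fun k => ∑ j ∈ range k, c j) atTop atTop :=
    tendsto_atTop_mono (fun k => by simpa using card_nsmul_le_sum (range k) c 1 fun j _ => hc j)
      tendsto_id
  have h := hasSum_sub_succ_of_antitone (u := fun k => (s : ℝ)⁻¹ ^ (∑ j ∈ range k, c j))
    (fun a b hab => pow_le_pow_of_le_one (by positivity) (inv_le_one_of_one_le₀ hs'.le)
      (sum_le_sum_of_subset (range_mono hab)))
    ((tendsto_pow_atTop_nhds_zero_of_lt_one (by positivity) (inv_lt_one_of_one_lt₀ hs')).comp hσ)
  rw [sum_range_zero, pow_zero] at h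
  refine h.congr_fun fun k => ?_
  rw [sum_range_succ, pow_add, pow_add, inv_pow, inv_pow]
  field_simp

theorem summable_sTerm {s : ℕ} (hs : 1 < s) {c : ℕ → ℕ} (hc : ∀ k, 1 ≤ c k) :
    Summable (sTerm s c) := by
  refine (hasSum_pow_sub_one_div_pow_sum_range hs hc).summable.of_nonneg_of_le
    (fun k => by unfold sTerm; positivity) fun k => ?_
  have hlt : (c k : ℝ) + 1 ≤ (s : ℝ) ^ c k := by exact_mod_cast Nat.lt_pow_self hs
  unfold sTerm
  gcongr
  linarith

theorem sVal_const {s : ℕ} (hs : 1 < s) {e : ℕ} (he : 1 ≤ e) :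
    sVal s (fun _ => e) = e / ((s : ℝ) ^ e - 1) := by
  have hpos : (0 : ℝ) < (s : ℝ) ^ e - 1 :=
    sub_pos.2 (one_lt_pow₀ (by exact_mod_cast hs) (by omega))
  have h := (hasSum_pow_sub_one_div_pow_sum_range hs fun _ => he).mul_left (e / ((s : ℝ) ^ e - 1))
  rw [mul_one] at h
  refine (h.congr_fun fun k => ?_).tsum_eq
  unfold sTerm
  field_simp

theorem sVal_const_le_sVal {s : ℕ} (hs : 1 < s) {e : ℕ} (he : 1 ≤ e) {c : ℕ → ℕ}
    (hc : ∀ k, 1 ≤ c k ∧ c k ≤ e) : sVal s (fun _ => e) ≤ sVal s c := by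
  have hpos : (0 : ℝ) < (s : ℝ) ^ e - 1 :=
    sub_pos.2 (one_lt_pow₀ (by exact_mod_cast hs) (by omega))
  rw [sVal_const hs he]
  refine hasSum_le (fun k => ?_)
    (by simpa only [mul_one] using
      (hasSum_pow_sub_one_div_pow_sum_range hs fun k => (hc k).1).mul_left (e / ((s : ℝ) ^ e - 1)))
    (summable_sTerm hs fun k => (hc k).1).hasSum
  rw [sTerm, ← mul_div_assoc]
  gcongr
  rw [div_mul_eq_mul_div, div_le_iff₀ hpos]
  exact mul_pow_sub_one_le_mul_pow_sub_one (by exact_mod_cast hs.le) (hc k).2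

theorem sVal_eq_gPart_add {s : ℕ} (hs : 1 < s) {c : ℕ → ℕ} (hc : ∀ k, 1 ≤ c k) (n : ℕ) :
    sVal s c = gPart s n c + sVal s (fun m => c (n + m)) / (s : ℝ) ^ (∑ k ∈ range n, c k) := by
  rw [sVal, ← (summable_sTerm hs hc).sum_add_tsum_nat_add n, sVal, ← tsum_div_const]
  congr 1
  refine tsum_congr fun k => ?_
  rw [sTerm, sTerm, show k + n + 1 = n + (k + 1) by omega, sum_range_add, pow_add, add_comm k n]
  ring

theorem gPart_congr {s n : ℕ} {c d : ℕ → ℕ} (h : ∀ k < n, d k = c k) :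
    gPart s n d = gPart s n c :=
  sum_congr rfl fun k hk => by
    have hk := mem_range.1 hk
    rw [sTerm, sTerm, h k hk, sum_congr rfl fun j hj => h j (by rw [mem_range] at hj; omega)]

theorem stmt3 (s n : ℕ) (hs : 2 < s) (c : ℕ → ℕ) (hc : ∀ k < n, 1 ≤ c k ∧ c k ≤ s - 1) :
    IsLeast (cyl s n c)
      (gPart s n c +
        ((s : ℝ) - 1) / ((s : ℝ) ^ (∑ k ∈ Finset.range n, c k) * ((s : ℝ) ^ (s - 1) - 1))) ∧
      gPart s n c +
          ((s : ℝ) - 1) / ((s : ℝ) ^ (∑ k ∈ Finset.range n, c k) * ((s : ℝ) ^ (s - 1) - 1)) =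
        sVal s (fun k => if k < n then c k else s - 1) := by
  have hs1 : 1 < s := by omega
  have hsplit : ∀ d : ℕ → ℕ, sValid s d → (∀ k < n, d k = c k) →
      sVal s d = gPart s n c + sVal s (fun m => d (n + m)) / (s : ℝ) ^ (∑ k ∈ range n, c k) := by
    intro d hd hdc
    rw [sVal_eq_gPart_add hs1 (fun k => (hd k).1) n, gPart_congr hdc,
      sum_congr rfl fun k hk => hdc k (mem_range.1 hk)]
  set c' : ℕ → ℕ := fun k => if k < n then c k else s - 1
  have hc'_valid : sValid s c' := fun k => by
    by_cases hk : k < n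
    · simpa [c', hk] using hc k hk
    · simp only [c', hk, if_false]
      omega
  have hc'_tail : (fun m => c' (n + m)) = fun _ => s - 1 := by
    funext m
    simp [c']
  have hmin : gPart s n c +
      ((s : ℝ) - 1) / ((s : ℝ) ^ (∑ k ∈ range n, c k) * ((s : ℝ) ^ (s - 1) - 1)) = sVal s c' := by
    rw [hsplit c' hc'_valid fun k hk => if_pos hk, hc'_tail, sVal_const hs1 (by omega),
      Nat.cast_pred (by omega), div_div, mul_comm]
  refine ⟨⟨⟨c', hc'_valid, fun k hk => if_pos hk, hmin⟩, ?_⟩, hmin⟩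
  rintro x ⟨d, hd, hdc, rfl⟩
  rw [hmin, hsplit c' hc'_valid fun k hk => if_pos hk, hsplit d hd hdc, hc'_tail]
  gcongr
  exact sVal_const_le_sVal hs1 (by omega) fun m => hd (n + m)
end

section
/- The set S_{(s,0)} is closed (in fact compact) in ℝ. -/
open Finset

/-- Auxiliary: from a sequence of `Fin (s-1)` to digits in `{1,…,s-1}`. -/
def digitFun (s : ℕ) (c : ℕ → Fin (s - 1)) : ℕ → ℕ := fun n => (c n : ℕ) + 1

lemma digitFun_valid (s : ℕ) (hs : 2 < s) (c : ℕ → Fin (s - 1)) :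
    sValid s (digitFun s c) := by
  intro k
  have := (c k).is_lt
  unfold digitFun
  omega

lemma continuous_sValDigit (s : ℕ) (hs : 2 < s) :
    Continuous fun c : ℕ → Fin (s - 1) => sVal s (digitFun s c) := by
  have hs0 : (0:ℝ) < s := by positivity
  have hs1 : (1:ℝ) < s := by exact_mod_cast hs.trans_le' (by norm_num)
  apply continuous_tsum (u := fun n : ℕ => ((s:ℝ) - 1) / s * ((1:ℝ)/s) ^ n)
  · intro n
    unfold sTerm
    apply Continuous.div
    · show Continuous ((fun v : Fin (s-1) => (((v:ℕ)+1 : ℕ) : ℝ)) ∘ fun c : ℕ → Fin (s-1) => c n)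
      exact continuous_of_discreteTopology.comp (continuous_apply n)
    · have : (fun c : ℕ → Fin (s-1) => (s:ℝ) ^ ∑ k ∈ Finset.range (n+1), digitFun s c k)
          = fun c => ∏ k ∈ Finset.range (n+1), (s:ℝ) ^ digitFun s c k := by
        funext c
        rw [Finset.prod_pow_eq_pow_sum]
      rw [this]
      refine continuous_finset_prod _ fun k _ => ?_
      show Continuous ((fun v : Fin (s-1) => (s:ℝ) ^ ((v:ℕ)+1)) ∘ fun c : ℕ → Fin (s-1) => c k)
      exact continuous_of_discreteTopology.comp (continuous_apply k)
    · intro c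
      exact (pow_pos hs0 _).ne'
  · exact (summable_geometric_of_lt_one (by positivity) (by
      rw [div_lt_one hs0]; linarith)).mul_left _
  · intro n c
    have hnumnn : (0:ℝ) ≤ (digitFun s c n : ℝ) := by positivity
    have hden : (0:ℝ) < (s:ℝ) ^ (∑ k ∈ Finset.range (n+1), digitFun s c k) := pow_pos hs0 _
    rw [Real.norm_eq_abs, abs_of_nonneg (by unfold sTerm; positivity)]
    unfold sTerm
    have hbound : ((digitFun s c n : ℕ) : ℝ) ≤ (s:ℝ) - 1 := by
      have := (c n).is_lt
      have : digitFun s c n ≤ s - 1 := by unfold digitFun; omega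
      have h2 : ((digitFun s c n : ℕ) : ℝ) ≤ ((s - 1 : ℕ) : ℝ) := by exact_mod_cast this
      calc ((digitFun s c n : ℕ) : ℝ) ≤ ((s - 1 : ℕ) : ℝ) := h2
        _ = (s:ℝ) - 1 := by push_cast [Nat.cast_sub (by omega : 1 ≤ s)]; ring
    have hexp : n + 1 ≤ ∑ k ∈ Finset.range (n+1), digitFun s c k := by
      calc n + 1 = ∑ _k ∈ Finset.range (n+1), 1 := by simp
        _ ≤ _ := Finset.sum_le_sum fun k _ => (digitFun_valid s hs c k).1
    have hpow : (s:ℝ) ^ (n+1) ≤ (s:ℝ) ^ (∑ k ∈ Finset.range (n+1), digitFun s c k) :=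
      pow_le_pow_right₀ hs1.le hexp
    have : ((s:ℝ) - 1) / s * ((1:ℝ)/s) ^ n = ((s:ℝ) - 1) / (s:ℝ) ^ (n+1) := by
      rw [div_pow, one_pow, div_mul_div_comm, mul_one, ← pow_succ']
    rw [this]
    exact div_le_div₀ (by linarith) hbound (by positivity) hpow

theorem stmt12 (s : ℕ) (hs : 2 < s) : IsClosed (Sset s) ∧ IsCompact (Sset s) := by
  have hrange : Sset s = Set.range (fun c : ℕ → Fin (s - 1) => sVal s (digitFun s c)) := by
    ext x
    constructor
    · rintro ⟨c, hc, rfl⟩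
      refine ⟨fun k => ⟨c k - 1, by have := hc k; omega⟩, ?_⟩
      have hdc : digitFun s (fun k => (⟨c k - 1, by have := hc k; omega⟩ : Fin (s-1))) = c := by
        funext k
        have := (hc k).1
        simp only [digitFun]
        omega
      show sVal s (digitFun s _) = sVal s c
      rw [hdc]
    · rintro ⟨c, rfl⟩
      exact ⟨digitFun s c, digitFun_valid s hs c, rfl⟩
  have hcomp : IsCompact (Sset s) := by
    rw [hrange]
    exact isCompact_range (continuous_sValDigit s hs)
  exact ⟨hcomp.isClosed, hcomp⟩
end

section
/- For s > 2 and u ∈ {2,…,s-1}, the infimum of S_{(s,u)} equals 1/(s-1), attained as Σ_{k=1}^∞ (1-u)/s^k + u/(s-1); and for u ∈ {1,…,s-2}, the supremum of S_{(s,u)} equals 1/(s^{u+1}−1) + u/(s−1), given by Σ_{k=1}^∞ 1/s^{(u+1)k} + u/(s−1). -/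
open Finset

/-- The sequence `(c_k)` has all terms in `{1, ..., s-1} \\ {u}`. -/
def uValid (s u : ℕ) (c : ℕ → ℕ) : Prop := ∀ k, 1 ≤ c k ∧ c k ≤ s - 1 ∧ c k ≠ u

/-- `x = u/(s-1) + Σ_{k=1}^∞ (c_k - u)/s^{c_1+⋯+c_k}`. -/
noncomputable def uVal (s u : ℕ) (c : ℕ → ℕ) : ℝ :=
  (u : ℝ) / ((s : ℝ) - 1) +
    ∑' n : ℕ, ((c n : ℝ) - (u : ℝ)) / (s : ℝ) ^ (∑ k ∈ Finset.range (n + 1), c k)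

/-- The set `S_{(s,u)}`. -/
def Uset (s u : ℕ) : Set ℝ := { x | ∃ c : ℕ → ℕ, uValid s u c ∧ x = uVal s u c }

/-!
Write `T(c) = Σₙ (cₙ - u) / s^(c₀ + ⋯ + cₙ)`, so that `T(c) = (c₀ - u + T(c ∘ succ)) / s^c₀`.

Infimum: the `n`-th term is at least `(1 - u) / s^(n+1)`, since `cₙ ≥ 1` and `c₀ + ⋯ + cₙ ≥ n + 1`;
the constant sequence `1` attains the bound.

Supremum: `B = 1 / (s^(u+1) - 1)` is `T` of the constant sequence `u + 1`, the fixed point of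
`x ↦ (1 + x) / s^(u+1)`. For every admissible digit `v` and every `x ≥ B` one has
`(v - u + x) / s^v - B ≤ (x - B) / s`. Taking `x = sup T` gives `sup T - B ≤ (sup T - B) / s`,
so `sup T = B`.
-/

theorem hasSum_div_pow_succ {p : ℝ} (hp : 1 < p) (a : ℝ) :
    HasSum (fun k : ℕ => a / p ^ (k + 1)) (a / (p - 1)) := by
  have hp0 : 0 < p := zero_lt_one.trans hp
  have h := (hasSum_geometric_of_lt_one (inv_nonneg.2 hp0.le) (inv_lt_one_of_one_lt₀ hp)).mul_left
    (a / p)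
  have hsum : a / p * (1 - p⁻¹)⁻¹ = a / (p - 1) := by
    have : p - 1 ≠ 0 := by linarith
    field_simp
  rw [hsum] at h
  refine h.congr_fun fun k => ?_
  rw [pow_succ, inv_pow]
  field_simp

theorem div_pow_sub_le_of_lt {s u v : ℕ} (hs : 1 < s) (hv : 1 ≤ v) (hvu : v < u) {x : ℝ}
    (hx : 1 / ((s : ℝ) ^ (u + 1) - 1) ≤ x) :
    ((v : ℝ) - u + x) / (s : ℝ) ^ v - 1 / ((s : ℝ) ^ (u + 1) - 1)
      ≤ (x - 1 / ((s : ℝ) ^ (u + 1) - 1)) / s := by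
  have hs1 : (1 : ℝ) < s := by exact_mod_cast hs
  set B := 1 / ((s : ℝ) ^ (u + 1) - 1)
  have hB : 0 < B := one_div_pos.2 (sub_pos.2 (one_lt_pow₀ hs1 (by omega)))
  have hvu' : (v : ℝ) - u ≤ -1 := by
    have : (v : ℝ) + 1 ≤ u := by exact_mod_cast hvu
    linarith
  rcases le_or_gt x 1 with hx1 | hx1
  · have : ((v : ℝ) - u + x) / (s : ℝ) ^ v ≤ 0 :=
      div_nonpos_of_nonpos_of_nonneg (by linarith) (by positivity)
    have : 0 ≤ (x - B) / s := div_nonneg (by linarith) (by positivity)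
    linarith
  · calc ((v : ℝ) - u + x) / (s : ℝ) ^ v - B ≤ (x - 1) / (s : ℝ) ^ v - B := by gcongr; linarith
      _ ≤ (x - 1) / s - B := by
        gcongr (?_ / ?_) - B
        · linarith
        · exact le_self_pow₀ hs1.le (by omega)
      _ ≤ (x - B) / s := by
        rw [div_sub' (by positivity), div_le_div_iff_of_pos_right (by positivity)]
        nlinarith

theorem div_pow_sub_le_of_gt {s u v : ℕ} (hs : 1 < s) (huv : u < v) {x : ℝ}
    (hx : 1 / ((s : ℝ) ^ (u + 1) - 1) ≤ x) :
    ((v : ℝ) - u + x) / (s : ℝ) ^ v - 1 / ((s : ℝ) ^ (u + 1) - 1)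
      ≤ (x - 1 / ((s : ℝ) ^ (u + 1) - 1)) / s := by
  have hs1 : (1 : ℝ) < s := by exact_mod_cast hs
  obtain ⟨w, rfl⟩ : ∃ w, v = u + 1 + w := ⟨v - u - 1, by omega⟩
  set P := (s : ℝ) ^ (u + 1) with hP
  have hPs : (s : ℝ) ≤ P := le_self_pow₀ hs1.le (by omega)
  have hB : 0 < 1 / (P - 1) := one_div_pos.2 (by linarith)
  have hw : 1 + (w : ℝ) ≤ (s : ℝ) ^ w := by
    have := one_add_mul_le_pow (a := (s : ℝ) - 1) (by linarith) w
    rw [add_sub_cancel] at this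
    have hs2 : (2 : ℝ) ≤ s := by exact_mod_cast hs
    have : (w : ℝ) ≤ w * ((s : ℝ) - 1) := le_mul_of_one_le_right (by positivity) (by linarith)
    linarith
  have hx0 : 0 ≤ x := hB.le.trans hx
  have h1 : ((↑(u + 1 + w) : ℝ) - u + x) / (s : ℝ) ^ (u + 1 + w) ≤ (1 + x) / P := by
    rw [pow_add, ← hP, div_le_div_iff₀ (by positivity) (by positivity)]
    push_cast
    have hP0 : 0 ≤ P := by positivity
    nlinarith [mul_le_mul_of_nonneg_left hw hP0,
      mul_le_mul_of_nonneg_left (one_le_pow₀ (n := w) hs1.le) (mul_nonneg hx0 hP0)]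
  have h2 : (1 + x) / P - 1 / (P - 1) ≤ (x - 1 / (P - 1)) / s := by
    have : (x - 1 / (P - 1)) / s - ((1 + x) / P - 1 / (P - 1))
        = (P - s) * (x - 1 / (P - 1)) / (s * P) := by
      have : P - 1 ≠ 0 := by linarith
      have : P ≠ 0 := by positivity
      field_simp
      ring
    have : 0 ≤ (P - s) * (x - 1 / (P - 1)) / (s * P) := by
      apply div_nonneg (mul_nonneg (by linarith) (by linarith)) (by positivity)
    linarith
  linarith

theorem div_pow_sub_le_of_ne {s u v : ℕ} (hs : 1 < s) (hv : 1 ≤ v) (hvu : v ≠ u) {x : ℝ}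
    (hx : 1 / ((s : ℝ) ^ (u + 1) - 1) ≤ x) :
    ((v : ℝ) - u + x) / (s : ℝ) ^ v - 1 / ((s : ℝ) ^ (u + 1) - 1)
      ≤ (x - 1 / ((s : ℝ) ^ (u + 1) - 1)) / s :=
  hvu.lt_or_gt.elim (div_pow_sub_le_of_lt hs hv · hx) (div_pow_sub_le_of_gt hs · hx)

theorem isGreatest_of_forall_sub_le_mul {S : Set ℝ} {a q : ℝ} (ha : a ∈ S) (hS : BddAbove S)
    (hq : q < 1) (h : ∀ x ∈ S, x - a ≤ q * (sSup S - a)) : IsGreatest S a := by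
  have hsup : sSup S - a ≤ q * (sSup S - a) :=
    sub_le_iff_le_add.2 (csSup_le ⟨a, ha⟩ fun x hx => sub_le_iff_le_add.1 (h x hx))
  have : sSup S ≤ a := by nlinarith [le_csSup hS ha]
  exact ⟨ha, fun x hx => (le_csSup hS hx).trans this⟩

noncomputable def uTerm (s u : ℕ) (c : ℕ → ℕ) (n : ℕ) : ℝ :=
  ((c n : ℝ) - u) / (s : ℝ) ^ (∑ k ∈ range (n + 1), c k)

theorem uVal_eq (s u : ℕ) (c : ℕ → ℕ) :
    uVal s u c = u / ((s : ℝ) - 1) + ∑' n, uTerm s u c n := rfl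

section

variable {s u : ℕ} {c : ℕ → ℕ}

theorem uValid.shift (hc : uValid s u c) : uValid s u (fun n => c (n + 1)) := fun n => hc (n + 1)

theorem uValid.succ_le_sum (hc : uValid s u c) (n : ℕ) : n + 1 ≤ ∑ k ∈ range (n + 1), c k := by
  simpa using Finset.card_nsmul_le_sum (range (n + 1)) c 1 fun k _ => (hc k).1

theorem uValid.pow_succ_le (hs : 1 < s) (hc : uValid s u c) (n : ℕ) :
    (s : ℝ) ^ (n + 1) ≤ (s : ℝ) ^ (∑ k ∈ range (n + 1), c k) :=
  pow_le_pow_right₀ (by exact_mod_cast hs.le) (hc.succ_le_sum n)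

theorem uValid.norm_uTerm_le (hs : 1 < s) (hc : uValid s u c) (n : ℕ) :
    ‖uTerm s u c n‖ ≤ (s + u) / (s : ℝ) ^ (n + 1) := by
  have hcn : (c n : ℝ) ≤ s := by exact_mod_cast (hc n).2.1.trans (Nat.sub_le s 1)
  rw [uTerm, norm_div, Real.norm_eq_abs, norm_pow, Real.norm_natCast]
  gcongr ?_ / ?_
  · rw [abs_sub_le_iff]
    constructor <;> linarith [(c n).cast_nonneg (α := ℝ), u.cast_nonneg (α := ℝ)]
  · exact hc.pow_succ_le hs n

theorem uValid.summable_uTerm (hs : 1 < s) (hc : uValid s u c) : Summable (uTerm s u c) :=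
  .of_norm_bounded (hasSum_div_pow_succ (by exact_mod_cast hs) _).summable (hc.norm_uTerm_le hs)

theorem uValid.tsum_uTerm_eq (hs : 1 < s) (hc : uValid s u c) :
    ∑' n, uTerm s u c n =
      ((c 0 : ℝ) - u + ∑' n, uTerm s u (fun n => c (n + 1)) n) / (s : ℝ) ^ c 0 := by
  rw [(hc.summable_uTerm hs).tsum_eq_zero_add, add_div, ← tsum_div_const]
  congr 1
  refine tsum_congr fun n => ?_
  rw [uTerm, uTerm, sum_range_succ' _ (n + 1), pow_add, div_div, mul_comm]

theorem tsum_uTerm_const (hs : 1 < s) {m : ℕ} (hm : 1 ≤ m) :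
    ∑' n, uTerm s u (fun _ => m) n = ((m : ℝ) - u) / ((s : ℝ) ^ m - 1) := by
  have hs1 : (1 : ℝ) < s := by exact_mod_cast hs
  refine ((hasSum_div_pow_succ (one_lt_pow₀ hs1 (by omega)) _).congr_fun fun n => ?_).tsum_eq
  rw [uTerm, sum_const, card_range, smul_eq_mul, ← pow_mul, mul_comm]

theorem uValid.le_tsum_uTerm (hs : 1 < s) (hu : 1 ≤ u) (hc : uValid s u c) :
    (1 - (u : ℝ)) / ((s : ℝ) - 1) ≤ ∑' n, uTerm s u c n := by
  have hs1 : (1 : ℝ) < s := by exact_mod_cast hs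
  refine hasSum_le (fun n => ?_) (hasSum_div_pow_succ hs1 _) (hc.summable_uTerm hs).hasSum
  have hu' : 1 - (u : ℝ) ≤ 0 := by simp [hu]
  calc (1 - (u : ℝ)) / (s : ℝ) ^ (n + 1)
      ≤ (1 - u) / (s : ℝ) ^ (∑ k ∈ range (n + 1), c k) := by
        rw [← neg_le_neg_iff, ← neg_div, ← neg_div]
        exact div_le_div_of_nonneg_left (by linarith) (by positivity) (hc.pow_succ_le hs n)
    _ ≤ uTerm s u c n := by
        rw [uTerm]
        gcongr
        exact_mod_cast (hc n).1

theorem bddAbove_Uset (hs : 1 < s) : BddAbove (Uset s u) := by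
  refine ⟨u / ((s : ℝ) - 1) + (s + u) / ((s : ℝ) - 1), ?_⟩
  rintro _ ⟨c, hc, rfl⟩
  exact add_le_add_right (hasSum_le (fun n => (le_abs_self _).trans (hc.norm_uTerm_le hs n))
    (hc.summable_uTerm hs).hasSum (hasSum_div_pow_succ (by exact_mod_cast hs) _)) _

theorem isLeast_Uset (hs : 1 < s) (hu : 2 ≤ u) : IsLeast (Uset s u) (1 / ((s : ℝ) - 1)) := by
  refine ⟨⟨fun _ => 1, fun _ => by dsimp only; omega, ?_⟩, ?_⟩
  · rw [uVal_eq, tsum_uTerm_const hs le_rfl]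
    ring
  · rintro _ ⟨c, hc, rfl⟩
    calc 1 / ((s : ℝ) - 1) = u / ((s : ℝ) - 1) + (1 - u) / ((s : ℝ) - 1) := by ring
      _ ≤ uVal s u c := add_le_add_right (hc.le_tsum_uTerm hs (by omega)) _

theorem isGreatest_Uset (hs : 1 < s) (hu : u + 2 ≤ s) :
    IsGreatest (Uset s u) (1 / ((s : ℝ) ^ (u + 1) - 1) + u / ((s : ℝ) - 1)) := by
  have hs1 : (1 : ℝ) < s := by exact_mod_cast hs
  set B := 1 / ((s : ℝ) ^ (u + 1) - 1)
  have hmem : B + u / ((s : ℝ) - 1) ∈ Uset s u := by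
    refine ⟨fun _ => u + 1, fun _ => by dsimp only; omega, ?_⟩
    rw [uVal_eq, tsum_uTerm_const hs (by omega)]
    push_cast
    ring
  refine isGreatest_of_forall_sub_le_mul hmem (bddAbove_Uset hs) (inv_lt_one_of_one_lt₀ hs1) ?_
  rintro _ ⟨c, hc, rfl⟩
  set A := sSup (Uset s u) - u / ((s : ℝ) - 1)
  have htail : ∑' n, uTerm s u (fun n => c (n + 1)) n ≤ A := by
    have := le_csSup (bddAbove_Uset hs) ⟨_, hc.shift, rfl⟩
    rw [uVal_eq] at this
    linarith
  have hBA : B ≤ A := by linarith [le_csSup (bddAbove_Uset hs) hmem]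
  calc uVal s u c - (B + u / ((s : ℝ) - 1))
      = ((c 0 : ℝ) - u + ∑' n, uTerm s u (fun n => c (n + 1)) n) / (s : ℝ) ^ c 0 - B := by
        rw [uVal_eq, hc.tsum_uTerm_eq hs]
        ring
    _ ≤ ((c 0 : ℝ) - u + A) / (s : ℝ) ^ c 0 - B := by gcongr
    _ ≤ (A - B) / s := div_pow_sub_le_of_ne hs (hc 0).1 (hc 0).2.2 hBA
    _ = (s : ℝ)⁻¹ * (sSup (Uset s u) - (B + u / ((s : ℝ) - 1))) := by
        rw [div_eq_inv_mul]
        ring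

end

theorem stmt15_general (s u : ℕ) (hs : 2 < s) :
    (2 ≤ u →
      IsLeast (Uset s u) (1 / ((s : ℝ) - 1)) ∧
        (1 : ℝ) / ((s : ℝ) - 1) =
          (∑' k : ℕ, ((1 : ℝ) - (u : ℝ)) / (s : ℝ) ^ (k + 1)) + (u : ℝ) / ((s : ℝ) - 1)) ∧
    (1 ≤ u → u ≤ s - 2 →
      IsGreatest (Uset s u) (1 / ((s : ℝ) ^ (u + 1) - 1) + (u : ℝ) / ((s : ℝ) - 1)) ∧
        (1 : ℝ) / ((s : ℝ) ^ (u + 1) - 1) + (u : ℝ) / ((s : ℝ) - 1) =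
          (∑' k : ℕ, (1 : ℝ) / (s : ℝ) ^ ((u + 1) * (k + 1))) + (u : ℝ) / ((s : ℝ) - 1)) := by
  have hs1 : (1 : ℝ) < s := by exact_mod_cast hs.trans' one_lt_two
  refine ⟨fun hu => ⟨isLeast_Uset (by omega) hu, ?_⟩,
    fun _ hu => ⟨isGreatest_Uset (by omega) (by omega), ?_⟩⟩
  · rw [(hasSum_div_pow_succ hs1 _).tsum_eq]
    ring
  · simp_rw [pow_mul]
    rw [(hasSum_div_pow_succ (one_lt_pow₀ hs1 (by omega)) _).tsum_eq]

theorem stmt15 (s u : ℕ) (hs : 2 < s) (hu : u ≤ s - 1) :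
    (2 ≤ u →
      IsLeast (Uset s u) (1 / ((s : ℝ) - 1)) ∧
        (1 : ℝ) / ((s : ℝ) - 1) =
          (∑' k : ℕ, ((1 : ℝ) - (u : ℝ)) / (s : ℝ) ^ (k + 1)) + (u : ℝ) / ((s : ℝ) - 1)) ∧
    (1 ≤ u → u ≤ s - 2 →
      IsGreatest (Uset s u) (1 / ((s : ℝ) ^ (u + 1) - 1) + (u : ℝ) / ((s : ℝ) - 1)) ∧
        (1 : ℝ) / ((s : ℝ) ^ (u + 1) - 1) + (u : ℝ) / ((s : ℝ) - 1) =
          (∑' k : ℕ, (1 : ℝ) / (s : ℝ) ^ ((u + 1) * (k + 1))) + (u : ℝ) / ((s : ℝ) - 1)) :=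
  stmt15_general s u hs
end
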